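/- arXiv:2504.20950 — 4 statements merged into one kernel-verified Lean document; each statement's English description precedes it below -/
import Mathlib

section
/- Let G be a DAG and P a partition of its vertex set such that the quotient graph G/P is acyclic. Then each part of P is an interval (a set of consecutive elements) in some topological ordering of G. -/
/-!
Extend the transitive closure of the acyclic quotient relation to a linear order on the parts,
and the reachability order of `G` to a linear order on the vertices. Ordering the vertices
lexicographically by (part, vertex) keeps every part contiguous, and an edge either joins two
parts, and so increases the first key, or stays in a part, and so increases the second.
-/

open Relation

universe u

theorem Relation.exists_injective_strictMono_of_acyclic {α : Type u} (r : α → α → Prop)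
    (hr : ∀ a, ¬ TransGen r a a) :
    ∃ (β : Type u) (_ : LinearOrder β) (f : α → β), f.Injective ∧ ∀ a b, r a b → f a < f b := by
  have : IsStrictOrder α (TransGen r) :=
    { irrefl := hr
      trans := fun _ _ _ => TransGen.trans }
  let : PartialOrder α := partialOrderOfSO (TransGen r)
  refine ⟨LinearExtension α, inferInstance, toLinearExtension, fun _ _ h => h, fun a b hab => ?_⟩
  have hlt : a < b := TransGen.single hab
  exact lt_of_le_of_ne (toLinearExtension.monotone hlt.le) hlt.ne

def quotientRel {V ι : Type*} (E : V → V → Prop) (P : V → ι) (a b : ι) : Prop :=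
  a ≠ b ∧ ∃ u v, E u v ∧ P u = a ∧ P v = b

theorem exists_linearOrder_convex_parts {V ι : Type*} (E : V → V → Prop) (P : V → ι)
    (hacyc : ∀ v, ¬ TransGen E v v) (hQacyc : ∀ i, ¬ TransGen (quotientRel E P) i i) :
    ∃ _ : LinearOrder V, (∀ u v, E u v → u < v) ∧
      ∀ u v w, P u = P w → u ≤ v → v ≤ w → P v = P u := by
  obtain ⟨β, _, f, hf, hfQ⟩ := exists_injective_strictMono_of_acyclic (quotientRel E P) hQacyc
  obtain ⟨γ, _, g, hg, hgE⟩ := exists_injective_strictMono_of_acyclic E hacyc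
  let key : V → β ×ₗ γ := fun v => toLex (f (P v), g v)
  have key_injective : key.Injective := fun u v h => hg (congrArg (fun x => (ofLex x).2) h)
  refine ⟨LinearOrder.lift' key key_injective, fun u v huv => ?_, fun u v w huw huv hvw => ?_⟩
  · show key u < key v
    rw [Prod.Lex.toLex_lt_toLex]
    by_cases hP : P u = P v
    · exact Or.inr ⟨congrArg f hP, hgE u v huv⟩
    · exact Or.inl (hfQ _ _ ⟨hP, u, v, huv, rfl, rfl⟩)
  · have hPuv : f (P u) ≤ f (P v) := Prod.Lex.monotone_fst (key u) (key v) huv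
    have hPvw : f (P v) ≤ f (P w) := Prod.Lex.monotone_fst (key v) (key w) hvw
    exact hf (le_antisymm (huw ▸ hPvw) hPuv)

theorem stmt1_general {V ι : Type} [Fintype V] (E : V → V → Prop) (P : V → ι)
    (hacyc : ∀ v, ¬ Relation.TransGen E v v)
    (hQacyc : ∀ i : ι,
      ¬ Relation.TransGen (fun a b : ι => a ≠ b ∧ ∃ u v, E u v ∧ P u = a ∧ P v = b) i i) :
    ∃ ord : V ≃ Fin (Fintype.card V),
      (∀ u v, E u v → ord u < ord v) ∧
      (∀ u v w, P u = P w → ord u ≤ ord v → ord v ≤ ord w → P v = P u) := by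
  obtain ⟨_, hedge, hconvex⟩ := exists_linearOrder_convex_parts E P hacyc hQacyc
  let ord := Fintype.orderIsoFinOfCardEq V rfl
  refine ⟨ord.symm.toEquiv, fun u v huv => ?_, fun u v w huw huv hvw => ?_⟩
  · exact ord.symm.lt_iff_lt.mpr (hedge u v huv)
  · exact hconvex u v w huw (ord.symm.le_iff_le.mp huv) (ord.symm.le_iff_le.mp hvw)

/-- If the quotient of a DAG by a partition is acyclic, then each part of the
partition is an interval in some topological ordering of the DAG. -/
theorem stmt1 {V ι : Type} [Fintype V] [DecidableEq V] (E : V → V → Prop) (P : V → ι)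
    (hacyc : ∀ v, ¬ Relation.TransGen E v v)
    (hQacyc : ∀ i : ι,
      ¬ Relation.TransGen (fun a b : ι => a ≠ b ∧ ∃ u v, E u v ∧ P u = a ∧ P v = b) i i) :
    ∃ ord : V ≃ Fin (Fintype.card V),
      (∀ u v, E u v → ord u < ord v) ∧
      (∀ u v w, P u = P w → ord u ≤ ord v → ord v ≤ ord w → P v = P u) :=
  stmt1_general E P hacyc hQacyc
end

section
/- Low-degree DAG partition lemma (d'=2 case, simplified): for every finite DAG G with s vertices and maximum in-degree at most d ≥ 2, and every integer b with d ≤ b ≤ s, there exist a subdivision G' of G and a partition P of the vertices of G' such that (1) every part of P has at most b vertices, (2) every vertex of the quotient G'/P has in-degree at most 2, and (3) every directed path in G'/P has fewer than d·s/b edges. -/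
/-- Vertices of a subdivision of a graph on `Fin s`: original vertices (`inl`)
plus subdivision vertices `inr (u, v, k)`, the `k`-th vertex inserted into edge `(u,v)`. -/
def SubdivVert (s : ℕ) := Fin s ⊕ (Fin s × Fin s × ℕ)

/-- Valid vertices of the subdivision in which edge `(u,v)` is subdivided `n u v` times. -/
def SValid {s : ℕ} (E : Fin s → Fin s → Prop) (n : Fin s → Fin s → ℕ) : SubdivVert s → Prop
  | .inl _ => True
  | .inr (u, v, k) => E u v ∧ k < n u v

/-- Edges of the subdivision: edge `(u,v)` becomes the path
`u → (u,v,0) → (u,v,1) → ⋯ → (u,v,n u v - 1) → v` (a direct edge if `n u v = 0`). -/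
def SEdge {s : ℕ} (E : Fin s → Fin s → Prop) (n : Fin s → Fin s → ℕ) :
    SubdivVert s → SubdivVert s → Prop
  | .inl u, .inl v => E u v ∧ n u v = 0
  | .inl u, .inr (u', v', k) => u' = u ∧ E u' v' ∧ k = 0 ∧ 0 < n u' v'
  | .inr (u', v', k), .inl v => v' = v ∧ E u' v' ∧ k + 1 = n u' v'
  | .inr (u1, v1, k1), .inr (u2, v2, k2) =>
      u2 = u1 ∧ v2 = v1 ∧ E u1 v1 ∧ k2 = k1 + 1 ∧ k2 < n u1 v1

/-- Edges of the quotient of the subdivision by a partition `P`. -/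
def QEdge {s : ℕ} (E : Fin s → Fin s → Prop) (n : Fin s → Fin s → ℕ)
    (P : SubdivVert s → ℕ) (i j : ℕ) : Prop :=
  i ≠ j ∧ ∃ x y, SValid E n x ∧ SValid E n y ∧ SEdge E n x y ∧ P x = i ∧ P y = j

/-!
Order the vertices topologically and give each vertex `v` the weight `max (β · indeg v) b`, where
`β = b - d + 1`. Cutting the order into consecutive blocks of total weight `β b` assigns *levels*:
edges never go down, a level holds at most `β` vertices (each weighs at least `b`), and there are
fewer than `d s / b` levels since the total weight is at most `β d s`. An edge jumping over `m`
levels is subdivided `m` times, one vertex per intermediate level, so every quotient edge goes up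
exactly one level and quotient paths are short.

A part is a pair (level, tag). Tag `0` holds the vertices of the level; the other tags hold bundles
of subdivision chains. The chains of long edges into level `j` run in the bundle with tag `j + 1`,
except for `o j` of them (the early edges) that run in the bundle with tag `j` and end in the
tag-`0` part of level `j - 1`. A part is then only entered from the tag-`0` part one level down and
from the part one level down with its own tag (tag `ℓ + 1` for the tag-`0` part of level `ℓ`), so
quotient in-degrees are at most `2`. The overflow `o j = F j + o (j + 1) - b`, with `F j` long edges
into level `j`, keeps every bundle of size at most `b`; since `β F j` is at most the weight of level
`j`, a telescoping sum gives `o j < d`, so tag-`0` parts have at most `β + d - 1 = b` elements.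
-/

open Finset Relation

theorem List.IsChain.length_add_le_max {α : Type*} {R : α → α → Prop} {f : α → ℕ} {M : ℕ}
    (hR : ∀ i j, R i j → f j = f i + 1 ∧ f j ≤ M) {a : α} {l : List α}
    (h : (a :: l).IsChain R) : l.length + f a ≤ max M (f a) := by
  induction l generalizing a with
  | nil => simp
  | cons c t ih =>
    obtain ⟨hac, hct⟩ := List.isChain_cons_cons.mp h
    have := ih hct
    have := hR a c hac
    simp only [List.length_cons]
    omega

theorem List.IsChain.length_le {α : Type*} {R : α → α → Prop} {f : α → ℕ} {M : ℕ}
    (hR : ∀ i j, R i j → f j = f i + 1 ∧ f j ≤ M) {p : List α} (h : p.IsChain R) :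
    p.length ≤ M + 1 := by
  cases p with
  | nil => simp
  | cons a l =>
    have := h.length_add_le_max hR
    simp only [List.length_cons]
    omega

theorem Finset.card_le_of_forall_add_le {t : Finset ℕ} {lo m β : ℕ} (hm : 0 < m)
    (hmem : ∀ x ∈ t, lo ≤ x ∧ x < lo + β * m) (hsep : ∀ x ∈ t, ∀ y ∈ t, x < y → x + m ≤ y) :
    #t ≤ β := by
  have hdiv : ∀ x ∈ t, ∀ y ∈ t, x < y → (x - lo) / m < (y - lo) / m := fun x hx y hy hxy => by
    have := hsep x hx y hy hxy
    have := (hmem x hx).1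
    calc (x - lo) / m < (x - lo) / m + 1 := Nat.lt_succ_self _
      _ = (x - lo + m) / m := (Nat.add_div_right _ hm).symm
      _ ≤ (y - lo) / m := Nat.div_le_div_right (by omega)
  calc #t ≤ #(range β) := card_le_card_of_injOn (fun x => (x - lo) / m)
        (fun x hx => mem_range.mpr <| (Nat.div_lt_iff_lt_mul hm).mpr (by have := hmem x hx; omega))
        (fun x hx y hy hxy => by
          by_contra hne
          rcases Nat.lt_or_gt_of_ne hne with h | h
          · exact (hdiv x hx y hy h).ne hxy
          · exact (hdiv y hy x hx h).ne' hxy)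
    _ = β := card_range β

section TopologicalKey

variable {s : ℕ} (E : Fin s → Fin s → Prop)

open scoped Classical in
noncomputable def ancestorCount (v : Fin s) : ℕ := #{u | TransGen E u v}

noncomputable def topoKey (v : Fin s) : ℕ := ancestorCount E v * s + v

variable {E}

theorem ancestorCount_lt_of_edge (hacyc : ∀ v, ¬ TransGen E v v) {u v : Fin s} (h : E u v) :
    ancestorCount E u < ancestorCount E v := by
  classical
  refine card_lt_card ⟨fun w hw => ?_, fun hsub => ?_⟩
  · simp only [mem_filter_univ] at hw ⊢
    exact hw.tail h
  · have := hsub (by simpa using TransGen.single h : u ∈ ({w | TransGen E w v} : Finset _))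
    exact hacyc u (by simpa using this)

theorem topoKey_lt_of_edge (hacyc : ∀ v, ¬ TransGen E v v) {u v : Fin s} (h : E u v) :
    topoKey E u < topoKey E v := by
  have hlt := ancestorCount_lt_of_edge hacyc h
  have : ancestorCount E u * s + s ≤ ancestorCount E v * s := by
    simpa [Nat.succ_mul] using Nat.mul_le_mul_right s hlt
  simp only [topoKey]
  omega

variable (E) in
theorem topoKey_injective : Function.Injective (topoKey E) := fun u v h => by
  have := congrArg (· % s) h
  simp only [topoKey, Nat.add_comm _ (u : ℕ), Nat.add_comm _ (v : ℕ), Nat.add_mul_mod_self_right,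
    Nat.mod_eq_of_lt u.isLt, Nat.mod_eq_of_lt v.isLt] at this
  exact Fin.ext this

end TopologicalKey

section PrefixBlocks

variable {α : Type*} [Fintype α] (κ : α → ℕ) (w : α → ℕ) (C : ℕ)

def prefixWeight (a : α) : ℕ := ∑ x with κ x ≤ κ a, w x

def blockIdx (a : α) : ℕ := (prefixWeight κ w a - 1) / C

def weightBelow (j : ℕ) : ℕ := ∑ x with blockIdx κ w C x < j, w x

variable {κ w C}

theorem prefixWeight_mono {a a' : α} (h : κ a ≤ κ a') : prefixWeight κ w a ≤ prefixWeight κ w a' :=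
  sum_le_sum_of_subset fun x hx => by simp only [mem_filter_univ] at hx ⊢; omega

theorem le_prefixWeight (a : α) : w a ≤ prefixWeight κ w a :=
  single_le_sum (f := w) (fun _ _ => Nat.zero_le _) (by simp)

theorem prefixWeight_add_le {a a' : α} (h : κ a < κ a') :
    prefixWeight κ w a + w a' ≤ prefixWeight κ w a' := by
  classical
  have hsub : ({x | κ x ≤ κ a} : Finset α) ⊆ ({x | κ x ≤ κ a'} : Finset α).erase a' :=
    fun x hx => by
      simp only [mem_filter_univ, mem_erase] at hx ⊢
      exact ⟨by rintro rfl; omega, by omega⟩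
  calc prefixWeight κ w a + w a' ≤ ∑ x ∈ ({x | κ x ≤ κ a'} : Finset α).erase a', w x + w a' :=
        Nat.add_le_add_right (sum_le_sum_of_subset hsub) _
    _ = prefixWeight κ w a' := sum_erase_add _ _ (by simp)

theorem prefixWeight_lt (hw : ∀ a, 0 < w a) {a a' : α} (h : κ a < κ a') :
    prefixWeight κ w a < prefixWeight κ w a' :=
  (Nat.lt_add_of_pos_right (hw a')).trans_le (prefixWeight_add_le h)

theorem prefixWeight_injective (hκ : Function.Injective κ) (hw : ∀ a, 0 < w a) :
    Function.Injective (prefixWeight κ w) := fun a a' h => by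
  by_contra hne
  rcases Nat.lt_or_gt_of_ne (hκ.ne hne) with hlt | hlt
  · exact (prefixWeight_lt hw hlt).ne h
  · exact (prefixWeight_lt hw hlt).ne' h

theorem blockIdx_mono {a a' : α} (h : κ a ≤ κ a') : blockIdx κ w C a ≤ blockIdx κ w C a' :=
  Nat.div_le_div_right (Nat.sub_le_sub_right (prefixWeight_mono h) 1)

theorem blockIdx_mul_lt_sum (hw : ∀ a, 0 < w a) (a : α) : blockIdx κ w C a * C < ∑ x, w x :=
  calc blockIdx κ w C a * C ≤ prefixWeight κ w a - 1 := Nat.div_mul_le_self _ _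
    _ < prefixWeight κ w a := Nat.sub_lt (lt_of_lt_of_le (hw a) (le_prefixWeight a)) one_pos
    _ ≤ ∑ x, w x := sum_le_sum_of_subset (filter_subset _ _)

theorem weightBelow_succ (j : ℕ) :
    weightBelow κ w C (j + 1) = weightBelow κ w C j + ∑ x with blockIdx κ w C x = j, w x := by
  simp only [weightBelow, sum_filter, ← sum_add_distrib]
  refine sum_congr rfl fun x _ => ?_
  split_ifs <;> omega

theorem weightBelow_le (hw : ∀ a, 0 < w a) (hC : 0 < C) (j : ℕ) :
    weightBelow κ w C j ≤ j * C := by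
  rcases (({x | blockIdx κ w C x < j} : Finset α)).eq_empty_or_nonempty with hempty | hne
  · simp [weightBelow, hempty]
  obtain ⟨m, hm, hmax⟩ := exists_max_image _ κ hne
  simp only [mem_filter_univ] at hm hmax
  have hseg : ({x | blockIdx κ w C x < j} : Finset α) = ({x | κ x ≤ κ m} : Finset α) := by
    ext x
    simp only [mem_filter_univ]
    exact ⟨hmax x, fun hx => (blockIdx_mono hx).trans_lt hm⟩
  have := hw m |>.trans_le (le_prefixWeight (κ := κ) m)
  have := (Nat.div_lt_iff_lt_mul hC).mp hm
  rw [weightBelow, hseg]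
  change prefixWeight κ w m ≤ j * C
  omega

theorem lt_weightBelow_add (hκ : Function.Injective κ) (hw : ∀ a, 0 < w a) (hC : 0 < C) {M : ℕ}
    (hM : ∀ a, w a ≤ M) {j : ℕ} (a : α) (ha : j ≤ blockIdx κ w C a) :
    j * C < weightBelow κ w C j + M := by
  classical
  obtain ⟨u, hu, hmin⟩ := exists_min_image ({x | j ≤ blockIdx κ w C x} : Finset α) κ ⟨a, by simpa⟩
  simp only [mem_filter_univ] at hu hmin
  have hsub : ({x | κ x ≤ κ u} : Finset α) ⊆
      insert u ({x | blockIdx κ w C x < j} : Finset α) := fun x hx => by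
    simp only [mem_filter_univ, mem_insert] at hx ⊢
    by_contra! h
    exact h.1 (hκ (le_antisymm hx (hmin x h.2)))
  have hprefix : prefixWeight κ w u ≤ w u + weightBelow κ w C j :=
    (sum_le_sum_of_subset hsub).trans_eq (sum_insert (by simpa using hu))
  have := (Nat.le_div_iff_mul_le hC).mp hu
  have := hw u |>.trans_le (le_prefixWeight (κ := κ) u)
  have := hM u
  omega

theorem card_blockIdx_eq_le (hκ : Function.Injective κ) {m β : ℕ} (hm : 0 < m) (hβ : 0 < β)
    (hw : ∀ a, m ≤ w a) (ℓ : ℕ) : #({a | blockIdx κ w (β * m) a = ℓ} : Finset α) ≤ β := by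
  have hw' : ∀ a, 0 < w a := fun a => hm.trans_le (hw a)
  rw [← card_image_of_injective _ (prefixWeight_injective hκ hw')]
  refine card_le_of_forall_add_le (lo := ℓ * (β * m) + 1) hm ?_ ?_
  · simp only [mem_image, mem_filter_univ]
    rintro _ ⟨a, rfl, rfl⟩
    have hlo : blockIdx κ w (β * m) a * (β * m) ≤ prefixWeight κ w a - 1 :=
      Nat.div_mul_le_self _ _
    have hhi : prefixWeight κ w a - 1 < blockIdx κ w (β * m) a * (β * m) + β * m :=
      Nat.lt_div_mul_add (Nat.mul_pos hβ hm)
    have := hw' a |>.trans_le (le_prefixWeight (κ := κ) a)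
    generalize blockIdx κ w (β * m) a * (β * m) = lo at *
    omega
  · simp only [mem_image, mem_filter_univ]
    rintro _ ⟨a, -, rfl⟩ _ ⟨a', -, rfl⟩ hlt
    have hκlt : κ a < κ a' := by
      by_contra! h
      exact (prefixWeight_mono h).not_gt hlt
    exact (Nat.add_le_add_left (hw a') _).trans (prefixWeight_add_le hκlt)

end PrefixBlocks

section Overflow

variable (F : ℕ → ℕ) (b N : ℕ)

def overflow (j : ℕ) : ℕ :=
  if j ≤ N then F j + overflow (j + 1) - b else 0
termination_by N + 1 - j

variable {F b N}

theorem overflow_of_lt {j : ℕ} (h : N < j) : overflow F b N j = 0 := by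
  rw [overflow, if_neg (by omega)]

theorem overflow_of_le {j : ℕ} (h : j ≤ N) :
    overflow F b N j = F j + overflow F b N (j + 1) - b := by
  rw [overflow, if_pos h]

theorem mul_overflow_add_le {β : ℕ} {T : ℕ → ℕ} (hF : ∀ j, β * F j + T j ≤ T (j + 1))
    (hT : ∀ j, T j ≤ j * (β * b)) (j : ℕ) : β * overflow F b N j + T j ≤ j * (β * b) := by
  induction hk : N + 1 - j generalizing j with
  | zero => simpa [overflow_of_lt (show N < j by omega)] using hT j
  | succ k ih =>
    have hnext := ih (j + 1) (by omega)
    rw [overflow_of_le (by omega), Nat.mul_sub, Nat.mul_add]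
    have := hF j
    have := hT j
    rw [Nat.succ_mul] at hnext
    generalize β * b = C at *
    omega

end Overflow

section Construction

open scoped Classical

variable {s : ℕ} (d b : ℕ) (E : Fin s → Fin s → Prop)

def slack : ℕ := b - d + 1

noncomputable def weight (v : Fin s) : ℕ := max (slack d b * #{u | E u v}) b

noncomputable def level (v : Fin s) : ℕ :=
  blockIdx (topoKey E) (weight d b E) (slack d b * b) v

noncomputable def topLevel : ℕ := univ.sup (level d b E)

noncomputable def longEdges (j : ℕ) : Finset (Fin s × Fin s) :=
  {e | E e.1 e.2 ∧ level d b E e.2 = j ∧ level d b E e.1 + 2 ≤ j}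

noncomputable def levelOverflow (j : ℕ) : ℕ :=
  overflow (fun j => #(longEdges d b E j)) b (topLevel d b E) j

-- The `min` only makes the definition total: see `card_earlyEdges`.
noncomputable def earlyEdges (j : ℕ) : Finset (Fin s × Fin s) :=
  (exists_subset_card_eq (min_le_right (levelOverflow d b E j) #(longEdges d b E j))).choose

variable {d b E}

theorem le_weight (v : Fin s) : b ≤ weight d b E v := le_max_right _ _

theorem weight_le (hd : 1 ≤ d) (hdb : d ≤ b) (hindeg : ∀ v : Fin s, {u | E u v}.ncard ≤ d)
    (v : Fin s) : weight d b E v ≤ slack d b * d := by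
  have hdeg : #({u | E u v} : Finset (Fin s)) ≤ d := by
    simpa [← Set.ncard_coe_finset] using hindeg v
  refine max_le (Nat.mul_le_mul_left _ hdeg) ?_
  have : b - d ≤ (b - d) * d := Nat.le_mul_of_pos_right _ hd
  simp only [slack, Nat.add_mul, one_mul]
  omega

theorem level_le_of_edge (hacyc : ∀ v, ¬ TransGen E v v) {u v : Fin s} (h : E u v) :
    level d b E u ≤ level d b E v :=
  blockIdx_mono (topoKey_lt_of_edge hacyc h).le

theorem level_le_topLevel (v : Fin s) : level d b E v ≤ topLevel d b E :=
  le_sup (mem_univ v)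

theorem card_level_eq_le (hb : 0 < b) (ℓ : ℕ) :
    #({v | level d b E v = ℓ} : Finset (Fin s)) ≤ slack d b :=
  card_blockIdx_eq_le (topoKey_injective E) hb (Nat.succ_pos _) le_weight ℓ

theorem topLevel_mul_lt (hs : 0 < s) (hd : 1 ≤ d) (hdb : d ≤ b)
    (hindeg : ∀ v : Fin s, {u | E u v}.ncard ≤ d) : topLevel d b E * b < d * s := by
  have hb : ∀ v : Fin s, 0 < weight d b E v := fun v => (by omega : 0 < b).trans_le (le_weight v)
  obtain ⟨v, -, hv⟩ := exists_mem_eq_sup univ (univ_nonempty_iff.mpr ⟨⟨0, hs⟩⟩) (level d b E)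
  have htotal : ∑ x, weight d b E x ≤ s * (slack d b * d) := by
    simpa using sum_le_card_nsmul univ _ _ fun x _ => weight_le hd hdb hindeg x
  have := blockIdx_mul_lt_sum (κ := topoKey E) (C := slack d b * b) hb v
  rw [← level, ← hv] at this
  refine Nat.lt_of_mul_lt_mul_left (a := slack d b) ?_
  calc slack d b * (topLevel d b E * b) = topLevel d b E * (slack d b * b) := by ring
    _ < s * (slack d b * d) := this.trans_le htotal
    _ = slack d b * (d * s) := by ring

theorem levelOverflow_of_le {j : ℕ} (h : j ≤ topLevel d b E) :
    levelOverflow d b E j = #(longEdges d b E j) + levelOverflow d b E (j + 1) - b :=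
  overflow_of_le h

theorem levelOverflow_of_lt {j : ℕ} (h : topLevel d b E < j) : levelOverflow d b E j = 0 :=
  overflow_of_lt h

theorem slack_mul_card_longEdges_add_le (j : ℕ) :
    slack d b * #(longEdges d b E j) + weightBelow (topoKey E) (weight d b E) (slack d b * b) j
      ≤ weightBelow (topoKey E) (weight d b E) (slack d b * b) (j + 1) := by
  have hfib :
      #(longEdges d b E j) ≤ ∑ v with level d b E v = j, #({u | E u v} : Finset (Fin s)) := by
    rw [card_eq_sum_card_fiberwise (f := Prod.snd) (t := {v | level d b E v = j})
      fun e he => by simp_all [longEdges]]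
    refine sum_le_sum fun v _ => card_le_card_of_injOn Prod.fst (fun e he => ?_) ?_
    · simp only [longEdges, mem_coe, mem_filter, mem_univ, true_and] at he ⊢
      exact he.2 ▸ he.1.1
    · rintro ⟨u, v⟩ h ⟨u', v'⟩ h' (rfl : u = u')
      simp_all
  rw [weightBelow_succ, Nat.add_comm]
  refine Nat.add_le_add_left ((Nat.mul_le_mul_left _ hfib).trans ?_) _
  rw [mul_sum]
  exact sum_le_sum fun v _ => le_max_left _ _

theorem levelOverflow_lt (hs : 0 < s) (hd : 1 ≤ d) (hdb : d ≤ b)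
    (hindeg : ∀ v : Fin s, {u | E u v}.ncard ≤ d) (j : ℕ) : levelOverflow d b E j < d := by
  rcases lt_or_ge (topLevel d b E) j with htop | htop
  · rw [levelOverflow_of_lt htop]
    omega
  obtain ⟨v, -, hv⟩ := exists_mem_eq_sup univ (univ_nonempty_iff.mpr ⟨⟨0, hs⟩⟩) (level d b E)
  have hw : ∀ v : Fin s, 0 < weight d b E v := fun v => (by omega : 0 < b).trans_le (le_weight v)
  have hC : 0 < slack d b * b := Nat.mul_pos (Nat.succ_pos _) (by omega)
  have hupper := mul_overflow_add_le (N := topLevel d b E) slack_mul_card_longEdges_add_le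
    (weightBelow_le hw hC) j
  have hlower := lt_weightBelow_add (topoKey_injective E) hw hC (weight_le hd hdb hindeg) v
    (show j ≤ level d b E v from hv ▸ htop)
  exact Nat.lt_of_mul_lt_mul_left (a := slack d b) (by rw [levelOverflow]; omega)

theorem card_longEdges_add_levelOverflow_succ_le (j : ℕ) :
    #(longEdges d b E j) + levelOverflow d b E (j + 1) ≤ b + levelOverflow d b E j := by
  rcases le_or_gt j (topLevel d b E) with htop | htop
  · rw [levelOverflow_of_le htop]
    omega
  · have hempty : longEdges d b E j = ∅ := filter_eq_empty_iff.mpr fun e _ he => by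
      have := level_le_topLevel (d := d) (b := b) (E := E) e.2
      omega
    rw [hempty, levelOverflow_of_lt (by omega)]
    simp

theorem levelOverflow_le_card_longEdges (hs : 0 < s) (hd : 1 ≤ d) (hdb : d ≤ b)
    (hindeg : ∀ v : Fin s, {u | E u v}.ncard ≤ d) (j : ℕ) :
    levelOverflow d b E j ≤ #(longEdges d b E j) := by
  rcases le_or_gt j (topLevel d b E) with htop | htop
  · have := levelOverflow_lt hs hd hdb hindeg (j + 1)
    rw [levelOverflow_of_le htop]
    omega
  · rw [levelOverflow_of_lt htop]
    exact Nat.zero_le _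

theorem earlyEdges_subset (j : ℕ) : earlyEdges d b E j ⊆ longEdges d b E j :=
  (exists_subset_card_eq (min_le_right (levelOverflow d b E j) _)).choose_spec.1

theorem card_earlyEdges (hs : 0 < s) (hd : 1 ≤ d) (hdb : d ≤ b)
    (hindeg : ∀ v : Fin s, {u | E u v}.ncard ≤ d) (j : ℕ) :
    #(earlyEdges d b E j) = levelOverflow d b E j :=
  (exists_subset_card_eq (min_le_right (levelOverflow d b E j) _)).choose_spec.2.trans
    (min_eq_left (levelOverflow_le_card_longEdges hs hd hdb hindeg j))

variable (d b E)

noncomputable def subdivCount (u v : Fin s) : ℕ := level d b E v - level d b E u - 1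

noncomputable def chainTag (u v : Fin s) (k : ℕ) : ℕ :=
  if (u, v) ∈ earlyEdges d b E (level d b E v) then
    if level d b E u + k + 2 = level d b E v then 0 else level d b E v
  else level d b E v + 1

noncomputable def part : SubdivVert s → ℕ
  | .inl v => Nat.pair (level d b E v) 0
  | .inr (u, v, k) => Nat.pair (level d b E u + k + 1) (chainTag d b E u v k)

def lowerParts (i : ℕ) : Finset ℕ :=
  {Nat.pair (i.unpair.1 - 1) 0,
    Nat.pair (i.unpair.1 - 1) (if i.unpair.2 = 0 then i.unpair.1 + 1 else i.unpair.2)}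

variable {d b E}

theorem part_eq_or_mem_lowerParts (hacyc : ∀ v, ¬ TransGen E v v) {x y : SubdivVert s}
    (hx : SValid E (subdivCount d b E) x) (hy : SValid E (subdivCount d b E) y)
    (hxy : SEdge E (subdivCount d b E) x y) :
    part d b E x = part d b E y ∨
      ((part d b E y).unpair.1 = (part d b E x).unpair.1 + 1 ∧
        part d b E x ∈ lowerParts (part d b E y)) := by
  rcases x with u | ⟨u, v, k⟩ <;> rcases y with v' | ⟨u', v', k'⟩ <;>
    simp only [SValid, SEdge, subdivCount] at hx hy hxy <;>
    simp only [part, chainTag, lowerParts, Nat.unpair_pair, mem_insert, mem_singleton,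
      Nat.pair_eq_pair, and_true, if_true]
  · have := level_le_of_edge (d := d) (b := b) hacyc hxy.1
    omega
  · obtain ⟨rfl, -, rfl, -⟩ := hxy
    split_ifs <;> omega
  · obtain ⟨rfl, -, hk⟩ := hxy
    split_ifs <;> omega
  · obtain ⟨rfl, rfl, -, rfl, -⟩ := hxy
    split_ifs <;> first | contradiction | omega

variable (d b E) in
noncomputable def chainVertex (ℓ : ℕ) (e : Fin s × Fin s) : SubdivVert s :=
  .inr (e.1, e.2, ℓ - level d b E e.1 - 1)

theorem part_fiber_subset_of_tag_eq_zero (ℓ : ℕ) :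
    {x | SValid E (subdivCount d b E) x ∧ part d b E x = Nat.pair ℓ 0} ⊆
      ↑(({v | level d b E v = ℓ} : Finset (Fin s)).image Sum.inl ∪
        (earlyEdges d b E (ℓ + 1)).image (chainVertex d b E ℓ) : Finset (SubdivVert s)) := by
  rintro (v | ⟨u, v, k⟩) ⟨hx, hpart⟩ <;>
    simp only [SValid, subdivCount, part, chainTag, Nat.pair_eq_pair] at hx hpart <;>
    refine mem_coe.mpr (mem_union.mpr ?_)
  · exact Or.inl (mem_image.mpr ⟨v, by simpa using hpart.1, rfl⟩)
  obtain ⟨rfl, htag⟩ := hpart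
  split_ifs at htag with hearly hland
  · refine Or.inr (mem_image.mpr ⟨(u, v), ?_, by simp only [chainVertex]; congr; omega⟩)
    rwa [show level d b E u + k + 1 + 1 = level d b E v by omega]
  · omega

theorem part_fiber_subset_of_tag_ne_zero {ℓ r : ℕ} (hr : r ≠ 0) :
    {x | SValid E (subdivCount d b E) x ∧ part d b E x = Nat.pair ℓ r} ⊆
      ↑((longEdges d b E (r - 1) \ earlyEdges d b E (r - 1) ∪ earlyEdges d b E r).image
        (chainVertex d b E ℓ)) := by
  rintro (v | ⟨u, v, k⟩) ⟨hx, hpart⟩ <;>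
    simp only [SValid, subdivCount, part, chainTag, Nat.pair_eq_pair] at hx hpart
  · omega
  refine mem_image.mpr ⟨(u, v), ?_, by simp only [chainVertex]; congr; omega⟩
  simp only [mem_union, mem_sdiff, longEdges, mem_filter_univ]
  split_ifs at hpart with hearly hland
  · omega
  · exact Or.inr (hpart.2 ▸ hearly)
  · have hv : level d b E v = r - 1 := by omega
    exact Or.inl ⟨⟨hx.1, hv, by omega⟩, hv ▸ hearly⟩

theorem ncard_part_fiber_le (hs : 0 < s) (hd : 1 ≤ d) (hdb : d ≤ b)
    (hindeg : ∀ v : Fin s, {u | E u v}.ncard ≤ d) (i : ℕ) :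
    {x | SValid E (subdivCount d b E) x ∧ part d b E x = i}.ncard ≤ b := by
  obtain ⟨ℓ, r, rfl⟩ : ∃ ℓ r, i = Nat.pair ℓ r := ⟨_, _, (Nat.pair_unpair i).symm⟩
  rcases eq_or_ne r 0 with rfl | hr
  · refine (Set.ncard_le_ncard (part_fiber_subset_of_tag_eq_zero ℓ) (finite_toSet _)).trans ?_
    rw [Set.ncard_coe_finset]
    have := levelOverflow_lt hs hd hdb hindeg (ℓ + 1)
    calc _ ≤ _ := card_union_le _ _
      _ ≤ slack d b + levelOverflow d b E (ℓ + 1) :=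
        Nat.add_le_add (card_image_le.trans (card_level_eq_le (by omega) ℓ))
          (card_image_le.trans (card_earlyEdges hs hd hdb hindeg _).le)
      _ ≤ b := by simp only [slack]; omega
  · refine (Set.ncard_le_ncard (part_fiber_subset_of_tag_ne_zero hr) (finite_toSet _)).trans ?_
    rw [Set.ncard_coe_finset]
    have hstep := card_longEdges_add_levelOverflow_succ_le (d := d) (b := b) (E := E) (r - 1)
    have := levelOverflow_le_card_longEdges hs hd hdb hindeg (r - 1)
    rw [Nat.sub_add_cancel (Nat.one_le_iff_ne_zero.mpr hr)] at hstep
    calc _ ≤ _ := card_image_le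
      _ ≤ _ := card_union_le _ _
      _ = #(longEdges d b E (r - 1)) - levelOverflow d b E (r - 1) + levelOverflow d b E r := by
        rw [card_sdiff_of_subset (earlyEdges_subset _), card_earlyEdges hs hd hdb hindeg,
          card_earlyEdges hs hd hdb hindeg]
      _ ≤ b := by omega

theorem part_level_le_topLevel {x : SubdivVert s} (hx : SValid E (subdivCount d b E) x) :
    (part d b E x).unpair.1 ≤ topLevel d b E := by
  rcases x with v | ⟨u, v, k⟩
  · simpa [part] using level_le_topLevel v
  · have := level_le_topLevel (d := d) (b := b) (E := E) v
    simp only [SValid, subdivCount] at hx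
    simp only [part, Nat.unpair_pair]
    omega

theorem level_succ_and_mem_lowerParts_of_qEdge (hacyc : ∀ v, ¬ TransGen E v v) {i j : ℕ}
    (h : QEdge E (subdivCount d b E) (part d b E) i j) :
    j.unpair.1 = i.unpair.1 + 1 ∧ i ∈ lowerParts j := by
  obtain ⟨hne, x, y, hx, hy, hxy, rfl, rfl⟩ := h
  exact (part_eq_or_mem_lowerParts hacyc hx hy hxy).resolve_left hne

theorem ncard_qEdge_le_two (hacyc : ∀ v, ¬ TransGen E v v) (j : ℕ) :
    {i | QEdge E (subdivCount d b E) (part d b E) i j}.ncard ≤ 2 := by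
  refine (Set.ncard_le_ncard (t := lowerParts j)
    (fun i hi => (level_succ_and_mem_lowerParts_of_qEdge hacyc hi).2) (finite_toSet _)).trans ?_
  rw [Set.ncard_coe_finset]
  exact card_le_two

theorem length_le_of_isChain_qEdge (hacyc : ∀ v, ¬ TransGen E v v) {p : List ℕ}
    (hp : p.IsChain (QEdge E (subdivCount d b E) (part d b E))) : p.length ≤ topLevel d b E + 1 :=
  hp.length_le fun i j (h : QEdge E (subdivCount d b E) (part d b E) i j) =>
    ⟨(level_succ_and_mem_lowerParts_of_qEdge hacyc h).1, by
      obtain ⟨-, x, y, -, hy, -, -, rfl⟩ := h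
      exact part_level_le_topLevel hy⟩

end Construction

/-- Low-degree DAG partition lemma, simplified (`d' = 2`): every DAG on `s` vertices
with max in-degree `d` admits a subdivision and a partition with parts of size at most `b`,
quotient in-degree at most `2`, and all quotient paths of fewer than `d·s/b` edges. -/
theorem stmt8 (s d b : ℕ) (hd : 2 ≤ d) (hdb : d ≤ b) (hbs : b ≤ s)
    (E : Fin s → Fin s → Prop)
    (hacyc : ∀ v, ¬ Relation.TransGen E v v)
    (hindeg : ∀ v : Fin s, {u | E u v}.ncard ≤ d) :
    ∃ (n : Fin s → Fin s → ℕ) (P : SubdivVert s → ℕ),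
      (∀ i, {x | SValid E n x ∧ P x = i}.ncard ≤ b) ∧
      (∀ i, {j | QEdge E n P j i}.ncard ≤ 2) ∧
      (∀ p : List ℕ, p.Chain' (QEdge E n P) →
        ((p.length : ℚ) - 1 < ((d : ℚ) * (s : ℚ)) / (b : ℚ))) := by
  have hs : 0 < s := by omega
  refine ⟨subdivCount d b E, part d b E, ncard_part_fiber_le hs (by omega) hdb hindeg,
    ncard_qEdge_le_two hacyc, fun p hp => ?_⟩
  have hlen : (p.length : ℚ) ≤ topLevel d b E + 1 := by
    exact_mod_cast length_le_of_isChain_qEdge hacyc hp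
  have htop : (topLevel d b E : ℚ) * b < d * s := by
    exact_mod_cast topLevel_mul_lt hs (by omega) hdb hindeg
  rw [lt_div_iff₀ (Nat.cast_pos.mpr (by omega))]
  nlinarith
end

section
/- In the cable construction for a fixed target block B_j with at most b·(d'−1) incoming edges e_1, ..., e_m (m ≤ b·(d'−1)), where edge e_r (from block B_i, i < j) is subdivided j−i−1 times into vertices v_{e_r,1},...,v_{e_r,j−i−1} and v_{e_r,k} is placed in block B_{j,k}^{⌊r/b⌋}: the source endpoint of every subdivided edge entering the path into B_j lies in exactly one of the d' blocks B_{j,1}^0, ..., B_{j,1}^{d'−2}, B_{j−1}; hence block B_j has quotient in-degree at most d'. -/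
/-- Cable construction, in-degree of a target block `B_j`: the incoming edges
`e_1, ..., e_m` (with `m ≤ b·(d'-1)`), where `e_r` comes from block `B_{i r}` with
`i r < j`, enter `B_j` (after subdivision) from the block `B_{j-1}` when `i r = j - 1`
and from the cable block `B_{j,1}^{⌊r/b⌋}` otherwise; these source blocks number at
most `d'`, so `B_j` has quotient in-degree at most `d'`. Initial blocks are encoded
as `Sum.inl j'` and first cable blocks `B_{j,1}^ℓ` as `Sum.inr ℓ`. -/
theorem stmt16 (b d' j m : ℕ) (hb : 1 ≤ b) (hd' : 2 ≤ d') (hm : m ≤ b * (d' - 1))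
    (i : Fin m → ℕ) (hi : ∀ r, i r < j) :
    {B : ℕ ⊕ ℕ | ∃ r : Fin m,
      B = if i r + 1 = j then Sum.inl (j - 1) else Sum.inr ((r : ℕ) / b)}.ncard ≤ d' := by
  have hsub : {B : ℕ ⊕ ℕ | ∃ r : Fin m,
      B = if i r + 1 = j then Sum.inl (j - 1) else Sum.inr ((r : ℕ) / b)} ⊆
      insert (Sum.inl (j - 1)) (Sum.inr '' Set.Iio (d' - 1)) := by
    rintro B ⟨r, rfl⟩
    by_cases h : i r + 1 = j
    · simp [h]
    · simp only [h, if_false]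
      right
      refine ⟨(r : ℕ) / b, ?_, rfl⟩
      have : (r : ℕ) < b * (d' - 1) := lt_of_lt_of_le r.2 hm
      exact Nat.div_lt_iff_lt_mul (by omega) |>.2 (by rwa [Nat.mul_comm] at this)
  have hfin : (Sum.inr '' Set.Iio (d' - 1) : Set (ℕ ⊕ ℕ)).Finite :=
    (Set.finite_Iio _).image _
  calc _ ≤ (insert (Sum.inl (j - 1)) (Sum.inr '' Set.Iio (d' - 1)) : Set (ℕ ⊕ ℕ)).ncard :=
        Set.ncard_le_ncard hsub (hfin.insert _)
    _ ≤ (Sum.inr '' Set.Iio (d' - 1) : Set (ℕ ⊕ ℕ)).ncard + 1 :=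
        Set.ncard_insert_le _ _
    _ = (Set.Iio (d' - 1)).ncard + 1 := by
        rw [Set.ncard_image_of_injective _ Sum.inr_injective]
    _ = (d' - 1) + 1 := by
        simp [Set.ncard_eq_toFinset_card', Set.toFinset_Iio]
    _ ≤ d' := by omega
end

section
/- Composing the partition lemma with the tree-evaluation bound: if there is an algorithm solving tree evaluation of height h, arity 2, and value size b in space O(h·log b + b), then every size-s Boolean circuit with fan-in 2 can be evaluated in space O(√(s·log s)) (choose b = √(s·log s), giving h = O(s/b) = O(√(s/log s)) and total space O((s/b)·log b + b) = O(√(s·log s))). -/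
/-!
Write `L = log₂ s` and `t = √(s L)`, so that `L ≤ t ≤ s` and `s L / t = t`. The ceiling
`b = ⌈t⌉₊` lies in `[t, 2t]`, hence `log₂ b ≤ log₂ s² = 2L`, and `h = ⌈2s/b⌉₊ ≤ 2s/t + 1`.
Therefore `h log₂ b + b ≤ (2s/t + 1)·2L + 2t = 4t + 2L + 2t ≤ 8t`.
-/

open Real

lemma one_le_logb_two_natCast {s : ℕ} (hs : 2 ≤ s) : 1 ≤ logb 2 (s : ℝ) := by
  rw [le_logb_iff_rpow_le one_lt_two (by positivity), rpow_one]
  exact_mod_cast hs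

lemma logb_two_natCast_le_self (s : ℕ) : logb 2 (s : ℝ) ≤ s := by
  rcases s.eq_zero_or_pos with rfl | hs
  · simp
  rw [logb_le_iff_le_rpow one_lt_two (by positivity), rpow_natCast]
  exact_mod_cast s.lt_two_pow_self.le

lemma natCeil_div_le_div_add_one {x t b : ℝ} (hx : 0 ≤ x) (ht : 0 < t) (htb : t ≤ b) :
    (⌈x / b⌉₊ : ℝ) ≤ x / t + 1 :=
  calc (⌈x / b⌉₊ : ℝ) ≤ x / b + 1 := (Nat.ceil_lt_add_one (div_nonneg hx (ht.le.trans htb))).le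
    _ ≤ x / t + 1 := by gcongr

section

variable {s : ℕ} (hs : 2 ≤ s)
include hs

lemma logb_two_le_sqrt_mul_logb_two : logb 2 (s : ℝ) ≤ √(s * logb 2 s) := by
  have hL := one_le_logb_two_natCast hs
  apply le_sqrt_of_sq_le
  rw [sq]
  gcongr
  exact logb_two_natCast_le_self s

lemma sqrt_mul_logb_two_le_self : √(s * logb 2 s) ≤ s := by
  have hL := one_le_logb_two_natCast hs
  rw [sqrt_le_left (by positivity), sq]
  gcongr
  exact logb_two_natCast_le_self s

lemma logb_two_natCeil_sqrt_mul_logb_two_le :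
    logb 2 (⌈√(s * logb 2 s)⌉₊ : ℝ) ≤ 2 * logb 2 s := by
  set t := √(s * logb 2 s)
  have ht : 1 ≤ t := (one_le_logb_two_natCast hs).trans (logb_two_le_sqrt_mul_logb_two hs)
  have hs2 : (2 : ℝ) ≤ s := by exact_mod_cast hs
  have hb : (⌈t⌉₊ : ℝ) ≤ (s : ℝ) ^ 2 :=
    calc (⌈t⌉₊ : ℝ) ≤ 2 * t := Nat.ceil_le_two_mul (by linarith)
      _ ≤ 2 * s := by gcongr; exact sqrt_mul_logb_two_le_self hs
      _ ≤ (s : ℝ) ^ 2 := by nlinarith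
  calc logb 2 (⌈t⌉₊ : ℝ) ≤ logb 2 ((s : ℝ) ^ 2) :=
        logb_le_logb_of_le one_lt_two (by positivity) hb
    _ = 2 * logb 2 s := by simp [logb_pow]

end

/-- Arithmetic of composing the partition lemma with the Cook–Mertz bound:
for `b = ⌈√(s·log₂ s)⌉` and `h = ⌈2s/b⌉`, we have `h·log₂ b + b = O(√(s·log₂ s))`. -/
theorem stmt17 : ∃ C : ℝ, 0 < C ∧ ∀ s : ℕ, 2 ≤ s →
    ∀ b h : ℕ, b = ⌈Real.sqrt (s * Real.logb 2 s)⌉₊ → h = ⌈(2 * (s : ℝ)) / (b : ℝ)⌉₊ →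
    (h : ℝ) * Real.logb 2 (b : ℝ) + (b : ℝ) ≤ C * Real.sqrt (s * Real.logb 2 s) := by
  refine ⟨8, by norm_num, fun s hs b h hb hh => ?_⟩
  set L := logb 2 (s : ℝ)
  set t := √(s * L)
  have hL : 1 ≤ L := one_le_logb_two_natCast hs
  have hLt : L ≤ t := logb_two_le_sqrt_mul_logb_two hs
  have ht : 0 < t := by linarith
  have htb : t ≤ b := hb ▸ Nat.le_ceil t
  have hb2t : (b : ℝ) ≤ 2 * t := hb ▸ Nat.ceil_le_two_mul (by linarith)
  have hlogb : logb 2 (b : ℝ) ≤ 2 * L := hb ▸ logb_two_natCeil_sqrt_mul_logb_two_le hs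
  have hlogb0 : 0 ≤ logb 2 (b : ℝ) := logb_nonneg one_lt_two (by linarith)
  have hh' : (h : ℝ) ≤ 2 * s / t + 1 := hh ▸ natCeil_div_le_div_add_one (by positivity) ht htb
  calc (h : ℝ) * logb 2 b + b ≤ (2 * s / t + 1) * (2 * L) + 2 * t := by gcongr
    _ = 4 * (s * L / t) + 2 * L + 2 * t := by ring
    _ = 4 * t + 2 * L + 2 * t := by rw [div_sqrt]
    _ ≤ 8 * t := by linarith
end
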